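/- Every σ-w-Lebesgue linear operator from a Banach lattice E to a real normed space Y is bounded. In particular, every σ-order-to-weak continuous linear operator from E to Y is bounded. -/

import Mathlib

open Filter Set Topology Bornology

universe u

/-- `x_α ↓ 0`: the net `x` is decreasing with infimum `0`. -/
def DecreasesToZero {X : Type*} [Zero X] [PartialOrder X] {ι : Type*} [Preorder ι]
    (x : ι → X) : Prop :=
  Antitone x ∧ IsGLB (Set.range x) 0

/-- `x_α →o 0`: order convergence of the net `x` to `0`, i.e. there is a net `g_β`,
indexed by a (nonempty) directed set, decreasing with infimum `0`, such that for each `β`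
there is `α_β` with `±x_α ≤ g_β` for all `α ≥ α_β`. -/
def OrderConvZero {X : Type u} [Zero X] [Neg X] [PartialOrder X] {ι : Type*} [Preorder ι]
    (x : ι → X) : Prop :=
  ∃ (β : Type u) (pβ : Preorder β), Nonempty β ∧
    IsDirected β (fun b₁ b₂ => pβ.le b₁ b₂) ∧
    ∃ g : β → X, (∀ b₁ b₂ : β, pβ.le b₁ b₂ → g b₂ ≤ g b₁) ∧ IsGLB (Set.range g) 0 ∧
      ∀ b : β, ∃ a₀ : ι, ∀ a : ι, a₀ ≤ a → -g b ≤ x a ∧ x a ≤ g b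

/-- `x_α →r 0`: relative uniform convergence of the net `x` to `0`: for some `u ≥ 0`
there is an increasing sequence `(α_n)` of indices with `±x_α ≤ (1/n)u` for all `α ≥ α_n`. -/
def RuConvZero {X : Type*} [Zero X] [Neg X] [PartialOrder X] [SMul ℝ X] {ι : Type*} [Preorder ι]
    (x : ι → X) : Prop :=
  ∃ u : X, 0 ≤ u ∧ ∃ α : ℕ → ι, Monotone α ∧
    ∀ n : ℕ, 0 < n → ∀ a : ι, α n ≤ a → -((n : ℝ)⁻¹ • u) ≤ x a ∧ x a ≤ (n : ℝ)⁻¹ • u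

/-- The positive cone of an ordered TVS is normal: the topology has a base of neighborhoods
of `0` consisting of full sets. -/
def NormalConeTVS (Y : Type*) [Zero Y] [PartialOrder Y] [TopologicalSpace Y] : Prop :=
  ∀ U ∈ nhds (0 : Y), ∃ V ∈ nhds (0 : Y), V ⊆ U ∧
    ∀ a b x : Y, a ∈ V → b ∈ V → a ≤ x → x ≤ b → x ∈ V


/-!
If `T` were unbounded on a bounded set, splitting into positive and negative parts and rescaling
by `2⁻ⁿ` would give a positive summable sequence `xₙ` with `‖T xₙ‖ > n`. Its tails
`∑_{k ≥ n} xₖ` decrease to `0`, so for a σ-w-Lebesgue `T` the differences `T xₙ` of the images of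
consecutive tails are weakly null; by the uniform boundedness principle a weakly null sequence is
norm bounded, a contradiction. A sequence decreasing to `0` order converges to `0`, which gives
the σ-order-to-weak case.
-/

theorem DecreasesToZero.orderConvZero {X : Type u} [AddCommGroup X] [PartialOrder X]
    [IsOrderedAddMonoid X] {x : ℕ → X} (h : DecreasesToZero x) : OrderConvZero x := by
  obtain ⟨hanti, hglb⟩ := h
  refine ⟨ULift.{u} ℕ, inferInstance, ⟨⟨0⟩⟩, inferInstance, fun b => x b.down,
    fun _ _ hle => hanti hle, ?_, fun b => ⟨b.down, fun a ha => ⟨?_, hanti ha⟩⟩⟩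
  · convert hglb using 1
    exact ULift.down_surjective.range_comp x
  · exact (neg_nonpos.mpr (hglb.1 ⟨b.down, rfl⟩)).trans (hglb.1 ⟨a, rfl⟩)

section Operators

variable {E : Type u} [AddCommGroup E] [PartialOrder E] [Module ℝ E]
  {Y : Type*} [AddCommGroup Y] [Module ℝ Y] [TopologicalSpace Y]

def IsSigmaWLebesgue (T : E →ₗ[ℝ] Y) : Prop :=
  ∀ x : ℕ → E, DecreasesToZero x →
    ∀ f : Y →L[ℝ] ℝ, Tendsto (fun n => f (T (x n))) atTop (𝓝 0)

def IsSigmaOrderToWeakContinuous (T : E →ₗ[ℝ] Y) : Prop :=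
  ∀ x : ℕ → E, OrderConvZero x →
    ∀ f : Y →L[ℝ] ℝ, Tendsto (fun n => f (T (x n))) atTop (𝓝 0)

theorem IsSigmaOrderToWeakContinuous.isSigmaWLebesgue [IsOrderedAddMonoid E] {T : E →ₗ[ℝ] Y}
    (hT : IsSigmaOrderToWeakContinuous T) : IsSigmaWLebesgue T :=
  fun x hx => hT x hx.orderConvZero

end Operators

section Tails

variable {G : Type*} [AddCommGroup G] [TopologicalSpace G] [IsTopologicalAddGroup G] [T2Space G]
  {x : ℕ → G}

theorem tsum_nat_add_eq_add_tsum_nat_add (hx : Summable x) (n : ℕ) :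
    ∑' k, x (k + n) = x n + ∑' k, x (k + (n + 1)) := by
  have h := hx.sum_add_tsum_nat_add (n + 1)
  rw [Finset.sum_range_succ, add_assoc, ← hx.sum_add_tsum_nat_add n] at h
  exact (add_left_cancel h).symm

theorem decreasesToZero_tsum_nat_add [PartialOrder G] [IsOrderedAddMonoid G]
    [OrderClosedTopology G] (hx : Summable x) (hx0 : ∀ n, 0 ≤ x n) :
    DecreasesToZero fun n => ∑' k, x (k + n) := by
  refine ⟨antitone_nat_of_succ_le fun n => ?_, ?_, fun c hc => ?_⟩
  · rw [tsum_nat_add_eq_add_tsum_nat_add hx n]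
    exact le_add_of_nonneg_left (hx0 n)
  · rintro _ ⟨n, rfl⟩
    exact tsum_nonneg fun k => hx0 (k + n)
  · exact ge_of_tendsto' (tendsto_sum_nat_add x) fun n => hc ⟨n, rfl⟩

end Tails

theorem bddAbove_range_norm_of_forall_dual {𝕜 : Type*} [RCLike 𝕜] {Y : Type*}
    [NormedAddCommGroup Y] [NormedSpace 𝕜 Y] {ι : Type*} {y : ι → Y}
    (hy : ∀ f : StrongDual 𝕜 Y, BddAbove (range fun i => ‖f (y i)‖)) :
    BddAbove (range fun i => ‖y i‖) := by
  obtain ⟨C, hC⟩ := banach_steinhaus (g := fun i => NormedSpace.inclusionInDoubleDual 𝕜 Y (y i))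
    fun f => (hy f).imp fun _ hC i => hC ⟨i, rfl⟩
  refine ⟨C, forall_mem_range.mpr fun i => ?_⟩
  exact (NormedSpace.inclusionInDoubleDualLi 𝕜).norm_map (y i) ▸ hC i

section NormedLattice

variable {E : Type*} [NormedAddCommGroup E] [Lattice E] [HasSolidNorm E] [IsOrderedAddMonoid E]
  {Y : Type*} [NormedAddCommGroup Y]

theorem exists_nonneg_norm_le_and_norm_map_le {F : Type*} [FunLike F E Y]
    [AddMonoidHomClass F E Y] (T : F) (v : E) :
    ∃ w, 0 ≤ w ∧ ‖w‖ ≤ ‖v‖ ∧ ‖T v‖ ≤ 2 * ‖T w‖ := by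
  have hpos : ‖v⁺‖ ≤ ‖v‖ := by simpa using (lipschitzWith_posPart (α := E)).dist_le_mul v 0
  have hneg : ‖v⁻‖ ≤ ‖v‖ := by simpa using (lipschitzWith_negPart (α := E)).dist_le_mul v 0
  have hsplit : ‖T v‖ ≤ ‖T v⁺‖ + ‖T v⁻‖ := by
    simpa only [← map_sub, posPart_sub_negPart] using norm_sub_le (T v⁺) (T v⁻)
  rcases le_total ‖T v⁻‖ ‖T v⁺‖ with h | h
  · exact ⟨v⁺, posPart_nonneg v, hpos, by linarith⟩
  · exact ⟨v⁻, negPart_nonneg v, hneg, by linarith⟩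

end NormedLattice

section BanachLattice

variable {E : Type*} [NormedAddCommGroup E] [Lattice E] [HasSolidNorm E] [IsOrderedAddMonoid E]
  [NormedSpace ℝ E] {Y : Type*} [NormedAddCommGroup Y] [NormedSpace ℝ Y]

theorem exists_nonneg_lt_norm_map_of_not_isBounded_image (T : E →ₗ[ℝ] Y) {s : Set E} {R : ℝ}
    (hs : ∀ v ∈ s, ‖v‖ ≤ R) (hTs : ¬IsBounded (T '' s)) (C : ℝ) :
    ∃ w, 0 ≤ w ∧ ‖w‖ ≤ R ∧ C < ‖T w‖ := by
  obtain ⟨v, hvs, hv⟩ : ∃ v ∈ s, 2 * C < ‖T v‖ := by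
    contrapose! hTs
    exact isBounded_iff_forall_norm_le.mpr ⟨2 * C, forall_mem_image.mpr hTs⟩
  obtain ⟨w, hw0, hwv, hTw⟩ := exists_nonneg_norm_le_and_norm_map_le T v
  exact ⟨w, hw0, hwv.trans (hs v hvs), by linarith⟩

/-- Rescale positive elements `w n` of norm at most `R` with `‖T (w n)‖ > n 2ⁿ` by `2⁻ⁿ`. -/
theorem exists_summable_nonneg_of_not_isBounded_image [CompleteSpace E] [PosSMulMono ℝ E]
    (T : E →ₗ[ℝ] Y) {s : Set E} (hs : IsBounded s) (hTs : ¬IsBounded (T '' s)) :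
    ∃ x : ℕ → E, (∀ n, 0 ≤ x n) ∧ Summable x ∧ ∀ n : ℕ, (n : ℝ) < ‖T (x n)‖ := by
  obtain ⟨R, hR⟩ := isBounded_iff_forall_norm_le.mp hs
  choose w hw0 hwR hTw using fun n : ℕ =>
    exists_nonneg_lt_norm_map_of_not_isBounded_image T hR hTs (n * 2 ^ n)
  have hscale : ∀ n, (0 : ℝ) ≤ (2 ^ n)⁻¹ := fun n => by positivity
  refine ⟨fun n => ((2 : ℝ) ^ n)⁻¹ • w n, fun n => smul_nonneg (hscale n) (hw0 n), ?_, fun n => ?_⟩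
  · refine Summable.of_norm_bounded (summable_geometric_two.mul_left R) fun n => ?_
    rw [norm_smul_of_nonneg (hscale n), one_div, inv_pow, mul_comm]
    exact mul_le_mul_of_nonneg_right (hwR n) (hscale n)
  · rw [map_smul, norm_smul_of_nonneg (hscale n), inv_mul_eq_div, lt_div_iff₀ (by positivity)]
    exact hTw n

end BanachLattice

section SigmaWLebesgue

variable {E : Type*} [AddCommGroup E] [PartialOrder E] [Module ℝ E]
  {Y : Type*} [AddCommGroup Y] [Module ℝ Y] [TopologicalSpace Y] {T : E →ₗ[ℝ] Y}

/-- `x n` is the difference of the consecutive tails `∑' k, x (k + n)`, which decrease to `0`. -/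
theorem IsSigmaWLebesgue.tendsto_of_summable_nonneg [TopologicalSpace E] [IsTopologicalAddGroup E]
    [IsOrderedAddMonoid E] [OrderClosedTopology E] (hT : IsSigmaWLebesgue T) {x : ℕ → E}
    (hx0 : ∀ n, 0 ≤ x n) (hx : Summable x) (f : Y →L[ℝ] ℝ) :
    Tendsto (fun n => f (T (x n))) atTop (𝓝 0) := by
  have htail := hT _ (decreasesToZero_tsum_nat_add hx hx0) f
  have hdiff := htail.sub (htail.comp (tendsto_add_atTop_nat 1))
  simp only [sub_self] at hdiff
  refine hdiff.congr fun n => ?_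
  simp only [Function.comp_apply, tsum_nat_add_eq_add_tsum_nat_add hx n, map_add,
    add_sub_cancel_right]

end SigmaWLebesgue

theorem IsSigmaWLebesgue.isBounded_image {E : Type*} [NormedAddCommGroup E] [Lattice E]
    [HasSolidNorm E] [IsOrderedAddMonoid E] [NormedSpace ℝ E] [PosSMulMono ℝ E] [CompleteSpace E]
    {Y : Type*} [NormedAddCommGroup Y] [NormedSpace ℝ Y] {T : E →ₗ[ℝ] Y}
    (hT : IsSigmaWLebesgue T) {s : Set E} (hs : IsBounded s) : IsBounded (T '' s) := by
  by_contra hTs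
  obtain ⟨x, hx0, hx, hTx⟩ := exists_summable_nonneg_of_not_isBounded_image T hs hTs
  obtain ⟨C, hC⟩ := bddAbove_range_norm_of_forall_dual (𝕜 := ℝ) (y := fun n => T (x n))
    fun f => (hT.tendsto_of_summable_nonneg hx0 hx f).norm.bddAbove_range
  obtain ⟨n, hn⟩ := exists_nat_gt C
  linarith [hC ⟨n, rfl⟩, hTx n]

/-- every σ-w-Lebesgue linear operator from a Banach lattice to a normed
space is bounded; in particular, so is every σ-order-to-weak continuous linear operator. -/
theorem sigmaWLebesgue_implies_bounded_banachLattice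
    {E : Type*} [NormedAddCommGroup E] [Lattice E] [HasSolidNorm E] [IsOrderedAddMonoid E]
    [NormedSpace ℝ E] [PosSMulMono ℝ E]
    [CompleteSpace E]
    {Y : Type*} [NormedAddCommGroup Y] [NormedSpace ℝ Y]
    (T : E →ₗ[ℝ] Y) :
    ((∀ x : ℕ → E, DecreasesToZero x →
        ∀ f : Y →L[ℝ] ℝ, Tendsto (fun n => f (T (x n))) atTop (𝓝 0)) →
      ∀ s : Set E, Bornology.IsBounded s → Bornology.IsBounded (T '' s)) ∧
    ((∀ x : ℕ → E, OrderConvZero x →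
        ∀ f : Y →L[ℝ] ℝ, Tendsto (fun n => f (T (x n))) atTop (𝓝 0)) →
      ∀ s : Set E, Bornology.IsBounded s → Bornology.IsBounded (T '' s)) :=
  ⟨fun hT _ => IsSigmaWLebesgue.isBounded_image (T := T) hT,
    fun hT _ => (IsSigmaOrderToWeakContinuous.isSigmaWLebesgue (T := T) hT).isBounded_image⟩
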